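/- arXiv:1901.11485 — 5 statements merged into one kernel-verified Lean document; each statement's English description precedes it below -/
import Mathlib

section
/- Let A be a commutative ring (integral domain) and A, B nonzero polynomials in A[X] with deg(A) + deg(B) ≥ 1. Then there exist polynomials U, V ∈ A[X] with deg(U) < deg(B) and deg(V) < deg(A) such that A·U + B·V = Res(A, B), where Res(A, B) is the resultant of A and B. -/
open Polynomial

/-!
The Sylvester matrix below is Mathlib's `Polynomial.sylvester` with its rows and its columns
listed in reverse order, so the two resultants agree. Mathlib's Bézout identity
`Polynomial.exists_mul_add_mul_eq_C_resultant` (the adjugate of the Sylvester matrix applied to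
the constant polynomial `1`) then gives `U` and `V`.
-/

/-- The Sylvester matrix of two polynomials `f` and `g`: its first `deg g` columns
contain the shifted coefficients of `f` and its last `deg f` columns the shifted
coefficients of `g`. -/
noncomputable def sylvesterMatrix {R : Type*} [CommRing R] (f g : Polynomial R) :
    Matrix (Fin (g.natDegree + f.natDegree)) (Fin (g.natDegree + f.natDegree)) R :=
  fun i j =>
    if (j : ℕ) < g.natDegree then
      if (j : ℕ) ≤ (i : ℕ) ∧ (i : ℕ) ≤ (j : ℕ) + f.natDegree then
        f.coeff (f.natDegree + j - i)
      else 0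
    else
      if (j : ℕ) - g.natDegree ≤ (i : ℕ) ∧ (i : ℕ) ≤ (j : ℕ) - g.natDegree + g.natDegree then
        g.coeff (g.natDegree + ((j : ℕ) - g.natDegree) - i)
      else 0

/-- The resultant of `f` and `g`: the determinant of their Sylvester matrix. -/
noncomputable def resultant {R : Type*} [CommRing R] (f g : Polynomial R) : R :=
  (sylvesterMatrix f g).det

theorem sylvester_eq_reindex_sylvesterMatrix {R : Type*} [CommRing R] (f g : R[X]) :
    sylvester f g f.natDegree g.natDegree =
      (sylvesterMatrix f g).reindex ((finCongr (Nat.add_comm _ _)).trans Fin.revPerm)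
        ((finCongr (Nat.add_comm _ _)).trans Fin.revPerm) := by
  ext i j
  have := i.isLt
  induction j using Fin.addCases with
  | left j | right j =>
    have := j.isLt
    simp only [sylvester, sylvesterMatrix, Set.mem_Icc, Matrix.of_apply, Fin.addCases_left,
      Fin.addCases_right, Matrix.reindex_apply, Equiv.symm_trans, Fin.revPerm_symm, finCongr_symm,
      Equiv.coe_trans, Matrix.submatrix_apply, Function.comp_apply, Fin.revPerm_apply,
      finCongr_apply, Fin.val_cast, Fin.val_rev, Fin.val_castAdd, Fin.val_natAdd]
    split_ifs <;> first | rfl | omega | (congr 1; omega)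

theorem resultant_eq_polynomial_resultant {R : Type*} [CommRing R] (f g : R[X]) :
    _root_.resultant f g = Polynomial.resultant f g := by
  rw [Polynomial.resultant, sylvester_eq_reindex_sylvesterMatrix, Matrix.det_reindex_self,
    _root_.resultant]

theorem resultant_bezout_general {R : Type*} [CommRing R]
    (A B : Polynomial R) (hA : A ≠ 0) (hB : B ≠ 0)
    (hdeg : 1 ≤ A.natDegree + B.natDegree) :
    ∃ U V : Polynomial R, U.degree < B.degree ∧ V.degree < A.degree ∧
      A * U + B * V = C (_root_.resultant A B) := by
  obtain ⟨U, V, hU, hV, hUV⟩ :=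
    exists_mul_add_mul_eq_C_resultant A B le_rfl le_rfl (by omega)
  refine ⟨U, V, ?_, ?_, ?_⟩
  · rwa [degree_eq_natDegree hB]
  · rwa [degree_eq_natDegree hA]
  · rw [resultant_eq_polynomial_resultant, hUV]

/-- over an integral domain, for nonzero `A, B` with
`deg A + deg B ≥ 1`, there are `U, V` with `deg U < deg B`, `deg V < deg A` and
`A·U + B·V = Res(A,B)`. -/
theorem resultant_bezout {R : Type*} [CommRing R] [IsDomain R]
    (A B : Polynomial R) (hA : A ≠ 0) (hB : B ≠ 0)
    (hdeg : 1 ≤ A.natDegree + B.natDegree) :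
    ∃ U V : Polynomial R, U.degree < B.degree ∧ V.degree < A.degree ∧
      A * U + B * V = C (_root_.resultant A B) :=
  resultant_bezout_general A B hA hB hdeg
end

section
/- Let E(X) = X^n − λ with λ an even integer, φ a power of 2, and M ∈ Z[X] of degree < n with constant coefficient m_0. Then M is invertible in the quotient ring Z[X]/(E, φ) if and only if m_0 is odd. -/
/-!
Reducing modulo 2 and evaluating at `0` kills both `X ^ n - λ` (as `λ` is even and `n ≥ 1`) and
`2 ^ k`, so it factors through `ℤ[X]/(E, φ)` and sends units to units of `ZMod 2`: the constant
coefficient of a unit is odd. Conversely, in the quotient `2` is nilpotent (`2 ^ k = 0`) and hence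
so is `X` (`X ^ n = λ ∈ 2ℤ`); a polynomial with odd constant term is then `1` plus a nilpotent.
-/

open Polynomial

noncomputable def constantCoeffModTwo : ℤ[X] →+* ZMod 2 :=
  (Int.castRingHom (ZMod 2)).comp constantCoeff

lemma odd_coeff_zero_of_isUnit_mk {I : Ideal ℤ[X]} (hI : I ≤ RingHom.ker constantCoeffModTwo)
    {M : ℤ[X]} (hM : IsUnit (Ideal.Quotient.mk I M)) : Odd (M.coeff 0) := by
  have hunit : IsUnit ((M.coeff 0 : ℤ) : ZMod 2) := by
    simpa [constantCoeffModTwo] using hM.map (Ideal.Quotient.lift I _ hI)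
  exact Int.not_even_iff_odd.mp fun heven =>
    hunit.ne_zero (ZMod.intCast_eq_zero_iff_even.mpr heven)

lemma span_X_pow_sub_C_two_pow_le_ker {n k : ℕ} (hn : 1 ≤ n) (hk : 1 ≤ k) {lam : ℤ}
    (hlam : Even lam) :
    Ideal.span ({X ^ n - C lam, C (2 ^ k)} : Set ℤ[X]) ≤ RingHom.ker constantCoeffModTwo := by
  rw [Ideal.span_le, Set.pair_subset_iff]
  constructor
  · have hlam2 : (lam : ZMod 2) = 0 := ZMod.intCast_eq_zero_iff_even.mpr hlam
    simp [constantCoeffModTwo, hlam2]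
    omega
  · rw [SetLike.mem_coe, RingHom.mem_ker, constantCoeffModTwo, RingHom.comp_apply,
      constantCoeff_apply, coeff_C_zero, eq_intCast, Int.cast_pow]
    exact zero_pow (by omega)

lemma isNilpotent_of_pow_eq_intCast {R : Type*} [CommRing R] (h2 : IsNilpotent (2 : R))
    {x : R} {n : ℕ} {lam : ℤ} (hlam : Even lam) (hx : x ^ n = lam) : IsNilpotent x := by
  obtain ⟨μ, rfl⟩ := hlam
  have hpow : x ^ n = 2 * μ := by rw [hx]; push_cast; ring
  exact IsNilpotent.of_pow (hpow ▸ (Commute.all _ _).isNilpotent_mul_right h2)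

lemma isUnit_aeval_of_odd_coeff_zero {R : Type*} [CommRing R] (h2 : IsNilpotent (2 : R))
    {x : R} (hx : IsNilpotent x) {M : ℤ[X]} (hM : Odd (M.coeff 0)) : IsUnit (aeval x M) := by
  obtain ⟨Q, hQ⟩ := X_dvd_sub_C (p := M)
  have hsplit : aeval x M = (M.coeff 0 : R) + x * aeval x Q := by
    rw [show M = C (M.coeff 0) + X * Q by rw [← hQ]; ring]
    simp
  obtain ⟨t, ht⟩ := hM
  rw [hsplit, ht, show ((2 * t + 1 : ℤ) : R) + x * aeval x Q = 1 + (2 * t + x * aeval x Q) by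
    push_cast; ring]
  refine IsNilpotent.isUnit_one_add ((Commute.all _ _).isNilpotent_add ?_ ?_)
  · exact (Commute.all _ _).isNilpotent_mul_right h2
  · exact (Commute.all _ _).isNilpotent_mul_right hx

theorem isUnit_mod_E_phi_iff_const_odd_general (n : ℕ) (hn : 1 ≤ n) (lam : ℤ) (hlam : Even lam)
    (k : ℕ) (hk : 1 ≤ k) (φ : ℤ) (hφ : φ = 2 ^ k)
    (M : Polynomial ℤ) :
    IsUnit (Ideal.Quotient.mk
        (Ideal.span ({(X : Polynomial ℤ) ^ n - C lam, C φ} : Set (Polynomial ℤ))) M)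
      ↔ Odd (M.coeff 0) := by
  subst hφ
  set I := Ideal.span ({(X : ℤ[X]) ^ n - C lam, C (2 ^ k)} : Set ℤ[X])
  have h2 : IsNilpotent (2 : ℤ[X] ⧸ I) := by
    have h : Ideal.Quotient.mk I (C (2 ^ k)) = 0 :=
      Ideal.Quotient.eq_zero_iff_mem.mpr (Ideal.subset_span (by simp))
    exact ⟨k, by simpa [map_ofNat] using h⟩
  have hX : Ideal.Quotient.mk I X ^ n = (lam : ℤ[X] ⧸ I) := by
    simpa [sub_eq_zero] using Ideal.Quotient.eq_zero_iff_mem.mpr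
      (Ideal.subset_span (by simp) : X ^ n - C lam ∈ I)
  refine ⟨odd_coeff_zero_of_isUnit_mk (span_X_pow_sub_C_two_pow_le_ker hn hk hlam), fun hM => ?_⟩
  rw [← Ideal.Quotient.mkₐ_eq_mk ℤ, ← aeval_X_left_apply M, ← aeval_algHom_apply]
  exact isUnit_aeval_of_odd_coeff_zero h2 (isNilpotent_of_pow_eq_intCast h2 hlam hX) hM

/-- for `E = X^n - λ` with `λ` even and `φ = 2^k` (`k ≥ 1`), a polynomial
`M` of degree `< n` is invertible in `ℤ[X]/(E, φ)` iff its constant coefficient is odd. -/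
theorem isUnit_mod_E_phi_iff_const_odd (n : ℕ) (hn : 1 ≤ n) (lam : ℤ) (hlam : Even lam)
    (k : ℕ) (hk : 1 ≤ k) (φ : ℤ) (hφ : φ = 2 ^ k)
    (M : Polynomial ℤ) (hM : M.natDegree < n) :
    IsUnit (Ideal.Quotient.mk
        (Ideal.span ({(X : Polynomial ℤ) ^ n - C lam, C φ} : Set (Polynomial ℤ))) M)
      ↔ Odd (M.coeff 0) :=
  isUnit_mod_E_phi_iff_const_odd_general n hn lam hlam k hk φ hφ M
end

section
/- Let E(X) = X^n − λ with λ an odd integer and M ∈ Z[X] of degree < n. Let M̄ ∈ F_2[X] denote the reduction of M modulo 2. Then Res(E, M) is odd if and only if gcd(M̄, X^n − 1) = 1 in F_2[X]. Consequently, for φ a power of 2, M is invertible modulo (E, φ) if and only if gcd(M̄, X^n − 1) = 1. -/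
/-!
Mathlib's `Polynomial.resultant` is the determinant of the same Sylvester matrix with rows and
columns listed in reverse order, so the two resultants agree. For a monic `f`, the resultant
`Res(f, g)` is a unit in `S` after reduction along `R →+* S` exactly when the reductions of `f`
and `g` are coprime in `S[X]`. Over `ZMod 2` this says that `Res(E, M)` is odd iff `M̄` is
coprime to `Ē = X ^ n - 1`. Over `ZMod (2 ^ k)`, where an integer is a unit iff it is odd, it
says that `M` is a unit in `ℤ[X] ⧸ (E, 2 ^ k) ≃ (ZMod (2 ^ k))[X] ⧸ (E)` iff `Res(E, M)` is odd.
-/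

open Polynomial

theorem sylvesterMatrix_eq_reindex_sylvester {R : Type*} [CommRing R] (f g : R[X]) :
    sylvesterMatrix f g = (sylvester f g f.natDegree g.natDegree).reindex
      (Fin.revPerm.trans (finCongr (Nat.add_comm _ _)))
      (Fin.revPerm.trans (finCongr (Nat.add_comm _ _))) := by
  ext i j
  obtain ⟨j, rfl⟩ := (Fin.revPerm.trans (finCongr (Nat.add_comm _ _))).surjective j
  have hi := i.isLt
  induction j using Fin.addCases <;>
  · rename_i j
    have hj := j.isLt
    simp only [sylvesterMatrix, sylvester, Matrix.reindex_apply, Matrix.submatrix_apply,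
      Matrix.of_apply, Equiv.symm_trans, Equiv.coe_trans, Function.comp_apply, Equiv.trans_apply,
      Fin.revPerm_apply, Fin.revPerm_symm, Fin.rev_rev, finCongr_apply, finCongr_symm, Fin.cast_cast,
      Fin.cast_eq_self, Fin.val_cast, Fin.val_rev, Fin.val_castAdd, Fin.val_natAdd,
      Fin.addCases_left, Fin.addCases_right, Set.mem_Icc, tsub_le_iff_right]
    split_ifs <;> first | rfl | omega | (congr 1; omega)

theorem isUnit_resultant_iff_isCoprime_of_natDegree_le {S : Type*} [CommRing S] {f g : S[X]}
    {n : ℕ} (hf : f.Monic) (hg : g.natDegree ≤ n) :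
    IsUnit (Polynomial.resultant f g f.natDegree n) ↔ IsCoprime f g := by
  obtain ⟨k, rfl⟩ := Nat.exists_eq_add_of_le hg
  rw [resultant_add_right_deg _ _ _ _ _ le_rfl, coeff_natDegree, hf.leadingCoeff, one_pow,
    one_mul, isUnit_resultant_iff_isCoprime hf]

theorem isUnit_map_resultant_iff_isCoprime {R S : Type*} [CommRing R] [CommRing S]
    (φ : R →+* S) {f : R[X]} (hf : f.Monic) (g : R[X]) :
    IsUnit (φ (Polynomial.resultant f g)) ↔ IsCoprime (f.map φ) (g.map φ) := by
  cases subsingleton_or_nontrivial S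
  · exact iff_of_true (isUnit_of_subsingleton _) ⟨0, 0, Subsingleton.elim _ _⟩
  rw [← resultant_map_map, ← hf.natDegree_map φ]
  exact isUnit_resultant_iff_isCoprime_of_natDegree_le (hf.map φ) natDegree_map_le

theorem isUnit_mk_span_singleton_sup_ker_iff {A B : Type*} [CommRing A] [CommRing B]
    {π : A →+* B} (hπ : Function.Surjective π) (a x : A) :
    IsUnit (Ideal.Quotient.mk (Ideal.span {a} ⊔ RingHom.ker π) x) ↔ IsCoprime (π a) (π x) := by
  constructor
  · intro hx
    obtain ⟨y', hy'⟩ := hx.exists_right_inv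
    obtain ⟨y, rfl⟩ := Ideal.Quotient.mk_surjective y'
    rw [← map_mul, ← map_one (Ideal.Quotient.mk _), Ideal.Quotient.eq] at hy'
    obtain ⟨u, hu, z, hz, huz⟩ := Submodule.mem_sup.mp hy'
    obtain ⟨c, rfl⟩ := Ideal.mem_span_singleton'.mp hu
    have hπ_huz := congrArg π huz
    rw [RingHom.mem_ker] at hz
    simp only [map_add, map_mul, map_sub, map_one, hz] at hπ_huz
    exact ⟨-π c, π y, by linear_combination -hπ_huz⟩
  · rintro ⟨u', v', huv⟩
    obtain ⟨u, rfl⟩ := hπ u'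
    obtain ⟨v, rfl⟩ := hπ v'
    refine IsUnit.of_mul_eq_one (Ideal.Quotient.mk _ v) ?_
    rw [← map_mul, ← map_one (Ideal.Quotient.mk _), Ideal.Quotient.eq]
    have hker : u * a + v * x - 1 ∈ RingHom.ker π := by
      simp [RingHom.mem_ker, huv]
    convert Submodule.add_mem_sup (Ideal.mem_span_singleton'.mpr ⟨-u, rfl⟩) hker using 1
    ring

theorem span_pair_C_natCast_eq_sup_ker_mapRingHom (f : ℤ[X]) (n : ℕ) :
    Ideal.span {f, C (n : ℤ)} =
      Ideal.span {f} ⊔ RingHom.ker (mapRingHom (Int.castRingHom (ZMod n))) := by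
  rw [ker_mapRingHom, ZMod.ker_intCastRingHom, Ideal.map_span, Set.image_singleton,
    Ideal.span_insert]

theorem Int.odd_iff_isUnit_intCast_zmod_two_pow {k : ℕ} (hk : k ≠ 0) (r : ℤ) :
    Odd r ↔ IsUnit (r : ZMod (2 ^ k)) := by
  rw [ZMod.coe_int_isUnit_iff_isCoprime, Nat.cast_pow, Nat.cast_ofNat,
    IsCoprime.pow_left_iff (Nat.pos_of_ne_zero hk), Prime.coprime_iff_not_dvd Int.prime_two,
    ← even_iff_two_dvd, Int.not_even_iff_odd]

theorem odd_resultant_iff_isCoprime_map_zmod_two {f : ℤ[X]} (hf : f.Monic) (g : ℤ[X]) :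
    Odd (Polynomial.resultant f g) ↔
      IsCoprime (f.map (Int.castRingHom (ZMod 2))) (g.map (Int.castRingHom (ZMod 2))) := by
  rw [Int.odd_iff_isUnit_intCast_zmod_two_pow one_ne_zero]
  -- `ZMod (2 ^ 1)` unfolds to `ZMod 2`
  exact isUnit_map_resultant_iff_isCoprime (Int.castRingHom (ZMod 2)) hf g

theorem isUnit_mk_span_pair_C_two_pow_iff_odd_resultant {f : ℤ[X]} (hf : f.Monic) (g : ℤ[X])
    {k : ℕ} (hk : k ≠ 0) :
    IsUnit (Ideal.Quotient.mk (Ideal.span {f, C ((2 : ℤ) ^ k)}) g) ↔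
      Odd (Polynomial.resultant f g) := by
  rw [show (2 : ℤ) ^ k = ((2 ^ k : ℕ) : ℤ) by push_cast; rfl,
    span_pair_C_natCast_eq_sup_ker_mapRingHom,
    isUnit_mk_span_singleton_sup_ker_iff (map_surjective _ ZMod.intCast_surjective),
    coe_mapRingHom, ← isUnit_map_resultant_iff_isCoprime _ hf, eq_intCast,
    Int.odd_iff_isUnit_intCast_zmod_two_pow hk]

theorem isCoprime_iff_gcd_eq_one_zmod_two (p q : (ZMod 2)[X]) :
    IsCoprime p q ↔ EuclideanDomain.gcd p q = 1 := by
  rw [← EuclideanDomain.gcd_isUnit_iff, Polynomial.isUnit_iff]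
  constructor
  · rintro ⟨r, hr, hrp⟩
    have hunit : ∀ r : ZMod 2, r ≠ 0 → r = 1 := by decide
    rw [← hrp, hunit r hr.ne_zero, C_1]
  · intro h
    exact ⟨1, isUnit_one, by rw [C_1, h]⟩

theorem resultant_odd_iff_coprime_mod_two_general (n : ℕ) (hn : 1 ≤ n) (lam : ℤ) (hlam : Odd lam)
    (M : Polynomial ℤ) :
    (Odd (_root_.resultant ((X : Polynomial ℤ) ^ n - C lam) M)
      ↔ EuclideanDomain.gcd (M.map (Int.castRingHom (ZMod 2)))
          ((X : Polynomial (ZMod 2)) ^ n - 1) = 1) ∧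
    ∀ k : ℕ, 1 ≤ k →
      (IsUnit (Ideal.Quotient.mk
          (Ideal.span ({(X : Polynomial ℤ) ^ n - C lam, C ((2 : ℤ) ^ k)} : Set (Polynomial ℤ))) M)
        ↔ EuclideanDomain.gcd (M.map (Int.castRingHom (ZMod 2)))
            ((X : Polynomial (ZMod 2)) ^ n - 1) = 1) := by
  have hE : ((X : ℤ[X]) ^ n - C lam).Monic := monic_X_pow_sub_C lam (by omega)
  have hEmod2 : ((X : ℤ[X]) ^ n - C lam).map (Int.castRingHom (ZMod 2)) = X ^ n - 1 := by
    rw [Polynomial.map_sub, Polynomial.map_pow, map_X, map_C, eq_intCast,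
      ZMod.intCast_eq_one_iff_odd.mpr hlam, map_one]
  have hodd : Odd (_root_.resultant ((X : ℤ[X]) ^ n - C lam) M) ↔
      EuclideanDomain.gcd (M.map (Int.castRingHom (ZMod 2))) ((X : (ZMod 2)[X]) ^ n - 1) = 1 := by
    rw [resultant_eq_polynomial_resultant, odd_resultant_iff_isCoprime_map_zmod_two hE, hEmod2,
      isCoprime_comm, isCoprime_iff_gcd_eq_one_zmod_two]
  refine ⟨hodd, fun k hk => ?_⟩
  rw [isUnit_mk_span_pair_C_two_pow_iff_odd_resultant hE M (by omega),
    ← resultant_eq_polynomial_resultant, hodd]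

/-- for `E = X^n - λ` with `λ` odd and `M ∈ ℤ[X]` of degree `< n`,
`Res(E, M)` is odd iff `gcd(M̄, X^n - 1) = 1` in `F₂[X]`; consequently, for `φ = 2^k`,
`M` is invertible mod `(E, φ)` iff `gcd(M̄, X^n - 1) = 1`. -/
theorem resultant_odd_iff_coprime_mod_two (n : ℕ) (hn : 1 ≤ n) (lam : ℤ) (hlam : Odd lam)
    (M : Polynomial ℤ) (hM : M.natDegree < n) :
    (Odd (_root_.resultant ((X : Polynomial ℤ) ^ n - C lam) M)
      ↔ EuclideanDomain.gcd (M.map (Int.castRingHom (ZMod 2)))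
          ((X : Polynomial (ZMod 2)) ^ n - 1) = 1) ∧
    ∀ k : ℕ, 1 ≤ k →
      (IsUnit (Ideal.Quotient.mk
          (Ideal.span ({(X : Polynomial ℤ) ^ n - C lam, C ((2 : ℤ) ^ k)} : Set (Polynomial ℤ))) M)
        ↔ EuclideanDomain.gcd (M.map (Int.castRingHom (ZMod 2)))
            ((X : Polynomial (ZMod 2)) ^ n - 1) = 1) :=
  resultant_odd_iff_coprime_mod_two_general n hn lam hlam M
end

section
/- Let p be an odd prime, γ an integer, n ≥ 1, and L = { a ∈ Z[X] : deg(a) < n, a(γ) ≡ 0 (mod p) }. Define s_i = t_i + p·k_i where t_i = (−γ)^i mod p and k_i = t_i mod 2 (so each s_i is even), and let M_2 be the basis of L with rows (p, 0,...,0) and (s_i, 0,...,1,...,0) for 1 ≤ i ≤ n−1. Then the mod-2 reduction of M_2 is the identity matrix; consequently, for any Z-basis G = {G_1,...,G_n} of L and any target polynomial U ∈ F_2[X]/(X^n−1), there exist β_1,...,β_n ∈ {0,1} such that the mod-2 reduction of Σ β_i G_i equals U. -/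
/-- with `s_i = t_i + p·k_i`, `t_i = (-γ)^i mod p`, `k_i = t_i mod 2`,
the basis `M₂` of the lattice `L` (rows `(p,0,...,0)` and `(s_i,0,...,1,...,0)`) reduces
mod 2 to the identity matrix; consequently, for any ℤ-basis `G` of `L` and any target
vector `U` over `F₂`, some 0/1-combination of the `Gᵢ` reduces mod 2 to `U`. -/
theorem M2_reduces_to_identity_and_spans (p : ℕ) (hp : p.Prime) (hodd : Odd p)
    (n : ℕ) (hn : 1 ≤ n) (γ : ℤ)
    (t k s : Fin n → ℤ)
    (ht : ∀ i, t i = (-γ) ^ (i : ℕ) % (p : ℤ))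
    (hk : ∀ i, k i = t i % 2)
    (hs : ∀ i, s i = t i + (p : ℤ) * k i)
    (M2 : Matrix (Fin n) (Fin n) ℤ)
    (hM2 : ∀ i j, M2 i j =
      if (i : ℕ) = 0 then (if (j : ℕ) = 0 then (p : ℤ) else 0)
      else (if (j : ℕ) = 0 then s i else if j = i then 1 else 0)) :
    (M2.map (Int.cast : ℤ → ZMod 2) = 1) ∧
    ∀ G : Fin n → (Fin n → ℤ),
      (∀ i, (p : ℤ) ∣ ∑ j : Fin n, G i j * γ ^ (j : ℕ)) →
      (∀ v : Fin n → ℤ, (p : ℤ) ∣ (∑ j : Fin n, v j * γ ^ (j : ℕ)) →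
        ∃ c : Fin n → ℤ, v = ∑ i : Fin n, c i • G i) →
      ∀ U : Fin n → ZMod 2,
        ∃ β : Fin n → ℤ, (∀ i, β i = 0 ∨ β i = 1) ∧
          (fun j => (((∑ i : Fin n, β i • G i) j : ℤ) : ZMod 2)) = U := by

  have hp2 : ((p : ℤ) : ZMod 2) = 1 := by
    have h1 : (p : ℤ) % 2 = 1 := Int.odd_iff.mp (by exact_mod_cast hodd)
    calc ((p : ℤ) : ZMod 2) = (((p : ℤ) % 2 : ℤ) : ZMod 2) := (ZMod.intCast_mod _ 2).symm
    _ = 1 := by rw [h1]; norm_num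
  have hp2n : ((p : ℕ) : ZMod 2) = 1 := by exact_mod_cast hp2
  have mod2 : ∀ a : ℤ, ((a % 2 : ℤ) : ZMod 2) = (a : ZMod 2) := by
    intro a; have h := ZMod.intCast_mod a 2; norm_num at h; exact h
  constructor
  · ext i j
    rw [Matrix.map_apply, hM2, Matrix.one_apply]
    by_cases hi : (i : ℕ) = 0 <;> by_cases hj : (j : ℕ) = 0
    · have hij : i = j := Fin.ext (by omega)
      simp [hi, hj, hij, hp2n]
    · have hij : i ≠ j := fun h => hj (h ▸ hi)
      simp [hi, hj, hij]
    · have hij : ¬ i = j := fun h => hi (h ▸ hj)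
      have hs0 : ((s i : ℤ) : ZMod 2) = 0 := by
        rw [hs, hk]
        push_cast
        rw [hp2n, mod2]
        rw [one_mul, ← two_mul, show (2 : ZMod 2) = 0 by decide, zero_mul]
      simp [hi, hj, hij, hs0]
    · by_cases hji : j = i
      · simp [hi, hj, hji]
      · have hij : ¬ i = j := fun h => hji h.symm
        simp [hi, hj, hji, hij]
  · intro G hG hspan U
    have hcl : ∀ jj : Fin n, ∃ c : Fin n → ℤ,
        (fun m => if m = jj then (p : ℤ) else 0) = ∑ i : Fin n, c i • G i := by
      intro jj
      apply hspan
      have heq : (∑ j : Fin n, (if j = jj then (p : ℤ) else 0) * γ ^ (j : ℕ))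
          = (p : ℤ) * γ ^ (jj : ℕ) := by
        rw [Finset.sum_eq_single jj] <;> simp (config := {contextual := true})
      rw [heq]
      exact Dvd.intro _ rfl
    choose c hc using hcl
    set w : Fin n → ℤ := fun j => ((U j).val : ℤ) with hw
    set d : Fin n → ℤ := fun i => ∑ j : Fin n, w j * c j i with hd
    refine ⟨fun i => d i % 2, fun i => Int.emod_two_eq (d i), ?_⟩
    funext m
    have step1 : (((∑ i : Fin n, (d i % 2) • G i) m : ℤ) : ZMod 2)
        = (((∑ i : Fin n, d i • G i) m : ℤ) : ZMod 2) := by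
      simp only [Finset.sum_apply, Pi.smul_apply, smul_eq_mul]
      push_cast
      apply Finset.sum_congr rfl
      intro i _
      rw [mod2]
    rw [step1]
    have expand : ((∑ i : Fin n, d i • G i) m : ℤ) = w m * p := by
      simp only [Finset.sum_apply, Pi.smul_apply, smul_eq_mul, hd]
      calc ∑ i : Fin n, (∑ j : Fin n, w j * c j i) * G i m
          = ∑ i : Fin n, ∑ j : Fin n, w j * c j i * G i m := by
            apply Finset.sum_congr rfl; intro i _; rw [Finset.sum_mul]
      _ = ∑ j : Fin n, ∑ i : Fin n, w j * c j i * G i m := Finset.sum_comm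
      _ = ∑ j : Fin n, w j * ((∑ i : Fin n, c j i • G i) m) := by
            apply Finset.sum_congr rfl
            intro j _
            simp only [Finset.sum_apply, Pi.smul_apply, smul_eq_mul, Finset.mul_sum]
            apply Finset.sum_congr rfl
            intro i _
            ring
      _ = ∑ j : Fin n, w j * (if m = j then (p : ℤ) else 0) := by
            apply Finset.sum_congr rfl
            intro j _
            rw [← hc j]
      _ = w m * p := by
            rw [Finset.sum_eq_single m] <;> simp (config := {contextual := true}) [eq_comm]
    rw [expand]
    push_cast
    rw [hp2n, mul_one, hw]
    simp [ZMod.natCast_val, ZMod.cast_id]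
end

section
/- Let B = (p, n, γ, ρ, E) with E(X) = X^n − λ, γ^n ≡ λ (mod p), M ∈ Z[X] of degree < n with M(γ) ≡ 0 (mod p), φ an integer invertible condition: M' ≡ −M^{−1} mod (E, φ). Given V ∈ Z[X] with deg V < n, define Q = V·M' mod (E, φ) (coefficients reduced into [0, φ)), R = V + Q·M mod E, and S = R/φ. Then all coefficients of R are divisible by φ, and S(γ) ≡ V(γ)·φ^{−1} (mod p). -/
open Polynomial

/-! Write `I = (E, φ)`. Since `M'M ≡ -1` and `Q ≡ VM'` modulo `I`, we get
`V + QM ≡ V - VM'M ≡ 0` modulo `I`, so `R = (V + QM) %ₘ E` lies in `I`. A polynomial in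
`(E, φ)` of degree `< deg E` is `φ` times a polynomial, because reducing a representation
`uE + vφ` modulo the monic `E` kills `uE`. Finally `E(γ) ≡ M(γ) ≡ 0 (mod p)`, so evaluating
`R = V + (QM mod E)` at `γ` gives `R(γ) ≡ V(γ) (mod p)`. -/

lemma add_mul_mem_of_mul_add_one_mem {A : Type*} [CommRing A] {I : Ideal A} {M M' V Q : A}
    (hM' : M' * M + 1 ∈ I) (hQ : V * M' - Q ∈ I) : V + Q * M ∈ I := by
  have h : V + Q * M = (M' * M + 1) * V - (V * M' - Q) * M := by ring
  rw [h]
  exact I.sub_mem (I.mul_mem_right _ hM') (I.mul_mem_right _ hQ)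

namespace Polynomial

variable {A : Type*} [CommRing A]

lemma eval_dvd_eval_modByMonic_sub (P E : A[X]) (x : A) :
    E.eval x ∣ (P %ₘ E).eval x - P.eval x := by
  simpa only [eval_sub] using eval_dvd (x := x) (dvd_modByMonic_sub P E)

lemma add_modByMonic_of_degree_lt [Nontrivial A] {V P E : A[X]} (hE : E.Monic)
    (hV : V.degree < E.degree) : (V + P) %ₘ E = V + P %ₘ E := by
  rw [add_modByMonic, (modByMonic_eq_self_iff hE).mpr hV]

lemma exists_modByMonic_eq_C_mul_of_mem_span_pair {P E : A[X]} {c : A} (hE : E.Monic)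
    (hP : P ∈ Ideal.span {E, C c}) : ∃ S : A[X], P %ₘ E = C c * S := by
  obtain ⟨u, v, rfl⟩ := Ideal.mem_span_pair.mp hP
  refine ⟨v %ₘ E, ?_⟩
  rw [add_modByMonic, (modByMonic_eq_zero_iff_dvd hE).mpr (dvd_mul_left E u), zero_add,
    mul_comm, ← smul_eq_C_mul, ← smul_eq_C_mul, smul_modByMonic]

end Polynomial

theorem redCoeff_correct_general (p n : ℕ)
    (γ lam : ℤ) (hγ : γ ^ n ≡ lam [ZMOD p])
    (φ : ℤ)
    (M : Polynomial ℤ) (hMroot : (p : ℤ) ∣ M.eval γ)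
    (M' : Polynomial ℤ)
    (hM' : M' * M + 1 ∈
      Ideal.span ({(X : Polynomial ℤ) ^ n - C lam, C φ} : Set (Polynomial ℤ)))
    (V : Polynomial ℤ) (hVdeg : V.natDegree < n)
    (Q : Polynomial ℤ)
    (hQ : V * M' - Q ∈
      Ideal.span ({(X : Polynomial ℤ) ^ n - C lam, C φ} : Set (Polynomial ℤ)))
    (R : Polynomial ℤ) (hR : R = V + (Q * M) %ₘ ((X : Polynomial ℤ) ^ n - C lam)) :
    (∀ i, φ ∣ R.coeff i) ∧
    ∃ S : Polynomial ℤ, (∀ i, S.coeff i * φ = R.coeff i) ∧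
      S.eval γ * φ ≡ V.eval γ [ZMOD p] := by
  set E : Polynomial ℤ := X ^ n - C lam
  have hEm : E.Monic := monic_X_pow_sub_C lam (by omega)
  have hVE : V.degree < E.degree := by
    rw [degree_X_pow_sub_C (by omega)]
    exact (degree_le_natDegree).trans_lt (WithBot.coe_lt_coe.mpr hVdeg)
  have hRmod : R = (V + Q * M) %ₘ E := by rw [hR, add_modByMonic_of_degree_lt hEm hVE]
  obtain ⟨S, hS⟩ := exists_modByMonic_eq_C_mul_of_mem_span_pair hEm
    (add_mul_mem_of_mul_add_one_mem hM' hQ)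
  rw [← hRmod] at hS
  have hpE : (p : ℤ) ∣ E.eval γ := by simpa [E] using hγ.symm.dvd
  have hpQM : (p : ℤ) ∣ ((Q * M) %ₘ E).eval γ := by
    have h := dvd_add (hpE.trans (eval_dvd_eval_modByMonic_sub (Q * M) E γ))
      (hMroot.mul_left (Q.eval γ))
    rwa [eval_mul, sub_add_cancel] at h
  refine ⟨fun i => ⟨S.coeff i, by rw [hS, coeff_C_mul]⟩, S,
    fun i => by rw [hS, coeff_C_mul, mul_comm], ?_⟩
  calc S.eval γ * φ = R.eval γ := by rw [hS, eval_mul, eval_C, mul_comm]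
    _ = V.eval γ + ((Q * M) %ₘ E).eval γ := by rw [hR, eval_add]
    _ ≡ V.eval γ + 0 [ZMOD p] := (Int.modEq_zero_iff_dvd.mpr hpQM).add_left _
    _ = V.eval γ := add_zero _

/-- correctness of the Montgomery-like coefficient reduction (RedCoeff).
With `E = X^n - λ`, `γ^n ≡ λ (mod p)`, `M(γ) ≡ 0 (mod p)`, `M'·M ≡ -1 mod (E, φ)`,
`Q = V·M' mod (E, φ)` (coefficients in `[0, φ)`) and `R = V + (Q·M mod E)`, all
coefficients of `R` are divisible by `φ` and `S = R/φ` satisfies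
`S(γ)·φ ≡ V(γ) (mod p)`, i.e. `S(γ) ≡ V(γ)·φ⁻¹ (mod p)`. -/
theorem redCoeff_correct (p n : ℕ) (hp : p.Prime) (hn : 1 ≤ n)
    (γ lam : ℤ) (hγ : γ ^ n ≡ lam [ZMOD p])
    (φ : ℤ) (hφ : 2 ≤ φ) (hφp : IsCoprime φ (p : ℤ))
    (M : Polynomial ℤ) (hMdeg : M.natDegree < n) (hMroot : (p : ℤ) ∣ M.eval γ)
    (M' : Polynomial ℤ)
    (hM' : M' * M + 1 ∈
      Ideal.span ({(X : Polynomial ℤ) ^ n - C lam, C φ} : Set (Polynomial ℤ)))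
    (V : Polynomial ℤ) (hVdeg : V.natDegree < n)
    (Q : Polynomial ℤ) (hQdeg : Q.natDegree < n)
    (hQrange : ∀ i, 0 ≤ Q.coeff i ∧ Q.coeff i < φ)
    (hQ : V * M' - Q ∈
      Ideal.span ({(X : Polynomial ℤ) ^ n - C lam, C φ} : Set (Polynomial ℤ)))
    (R : Polynomial ℤ) (hR : R = V + (Q * M) %ₘ ((X : Polynomial ℤ) ^ n - C lam)) :
    (∀ i, φ ∣ R.coeff i) ∧
    ∃ S : Polynomial ℤ, (∀ i, S.coeff i * φ = R.coeff i) ∧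
      S.eval γ * φ ≡ V.eval γ [ZMOD p] :=
  redCoeff_correct_general p n γ lam hγ φ M hMroot M' hM' V hVdeg Q hQ R hR
end
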